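/- (Lovász) Two graphs G and G' with at most n vertices are isomorphic if and only if hom(F,G) = hom(F,G') for all graphs F with at most n vertices. -/

import Mathlib

/-!
Sort the homomorphisms `F →g G` by their kernel `s`, a partition of `V(F)`. A homomorphism
with kernel `s` is the same as an injective homomorphism out of the quotient graph
`F / s = F.map (Quotient.mk s)` (and there is none if `s` merges two adjacent vertices).
Since `s = ⊥` gives the injective homomorphisms of `F` itself and every other kernel has a
smaller quotient, induction on `|V(F)|` turns equal homomorphism counts into equal counts of
injective homomorphisms. Taking `F = G` and `F = G'` produces injective homomorphisms
`G → G'` and `G' → G`, which for finite graphs forces an isomorphism: they are bijective on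
vertices and on edges.
-/

open Function

instance Setoid.instFinite {α : Type*} [Finite α] : Finite (Setoid α) :=
  Finite.of_injective _ fun _ _ => Setoid.eq_iff_rel_eq.mpr

theorem Setoid.card_quotient_lt_of_ne_bot {α : Type*} [Finite α] {s : Setoid α}
    (hs : s ≠ ⊥) :
    Nat.card (Quotient s) < Nat.card α := by
  by_contra! hle
  refine hs (Setoid.ext fun x y => ⟨fun h => ?_, fun h => h ▸ s.refl x⟩)
  exact (Quotient.mk_surjective.bijective_of_nat_card_le hle).1 (Quotient.sound h)

namespace SimpleGraph

variable {V W W' : Type*} {F : SimpleGraph V} {G : SimpleGraph W} {G' : SimpleGraph W'}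

theorem isEmpty_ker_eq_of_adj {s : Setoid V} {x y : V} (hxy : F.Adj x y) (hs : s x y) :
    IsEmpty {φ : F →g G // Setoid.ker φ = s} := by
  refine ⟨fun ⟨φ, hφ⟩ => G.loopless.irrefl (φ y) ?_⟩
  have hφxy : φ x = φ y := by rw [← hφ] at hs; exact hs
  simpa [hφxy] using φ.map_adj hxy

noncomputable def kerEquivInjectiveHomMap {s : Setoid V}
    (hs : ∀ ⦃x y⦄, F.Adj x y → ¬ s x y) :
    {φ : F →g G // Setoid.ker φ = s} ≃
      {ψ : F.map (Quotient.mk s) →g G // Injective ψ} where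
  toFun := fun ⟨φ, hφ⟩ =>
    ⟨⟨Quotient.lift φ fun x y h => by rw [← hφ] at h; exact h, by
        rintro _ _ ⟨-, x, y, hxy, rfl, rfl⟩
        exact φ.map_adj hxy⟩,
      Quotient.ind₂ fun x y h => Quotient.sound (by rw [← hφ]; exact h)⟩
  invFun := fun ⟨ψ, hψ⟩ =>
    ⟨ψ.comp (Hom.map _ F fun h hs' => hs h (Quotient.exact hs')),
      Setoid.ext fun _ _ =>
        ⟨fun h => Quotient.exact (hψ h), fun h => congrArg ψ (Quotient.sound h)⟩⟩
  left_inv := fun _ => rfl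
  right_inv := fun _ => Subtype.ext (DFunLike.ext _ _ (Quotient.ind fun _ => rfl))

open scoped Classical in
theorem card_hom_eq_card_injective_add_sum [Finite V] [Finite W] [Fintype (Setoid V)] :
    Nat.card (F →g G) = Nat.card {φ : F →g G // Injective φ} +
      ∑ s ∈ Finset.univ.erase ⊥, Nat.card {φ : F →g G // Setoid.ker φ = s} := by
  have hbot : Nat.card {φ : F →g G // Injective φ} =
      Nat.card {φ : F →g G // Setoid.ker φ = ⊥} :=
    Nat.card_congr (Equiv.subtypeEquivRight fun φ => Setoid.injective_iff_ker_bot φ)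
  rw [hbot, Finset.add_sum_erase _ (fun s => Nat.card {φ : F →g G // Setoid.ker φ = s})
    (Finset.mem_univ _), ← Nat.card_sigma, Nat.card_congr (Equiv.sigmaFiberEquiv _)]

theorem card_injective_hom_eq_of_card_hom_eq [Finite W] [Finite W'] {n : ℕ}
    (h : ∀ k ≤ n, ∀ F : SimpleGraph (Fin k), Nat.card (F →g G) = Nat.card (F →g G'))
    {V : Type*} [Finite V] (hV : Nat.card V ≤ n) (F : SimpleGraph V) :
    Nat.card {φ : F →g G // Injective φ} = Nat.card {φ : F →g G' // Injective φ} := by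
  induction hc : Nat.card V using Nat.strong_induction_on generalizing V with
  | _ k ih =>
  classical
  have : Fintype V := Fintype.ofFinite V
  have : Fintype (Setoid V) := Fintype.ofFinite _
  have hF : Nat.card (F →g G) = Nat.card (F →g G') := by
    let e := F.overFinIso (Fintype.card_eq_nat_card.trans hc)
    rw [Nat.card_congr (e.homCongr Iso.refl), Nat.card_congr (e.homCongr Iso.refl)]
    exact h k (hc ▸ hV) _
  have hker : ∀ s ∈ Finset.univ.erase ⊥, Nat.card {φ : F →g G // Setoid.ker φ = s} =
      Nat.card {φ : F →g G' // Setoid.ker φ = s} := by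
    intro s hs
    by_cases hind : ∀ ⦃x y⦄, F.Adj x y → ¬ s x y
    · rw [Nat.card_congr (kerEquivInjectiveHomMap hind),
        Nat.card_congr (kerEquivInjectiveHomMap hind)]
      have hlt := Setoid.card_quotient_lt_of_ne_bot (Finset.ne_of_mem_erase hs)
      exact ih _ (hc ▸ hlt) (hlt.le.trans hV) _ rfl
    · push Not at hind
      obtain ⟨x, y, hxy, hs⟩ := hind
      have := isEmpty_ker_eq_of_adj (G := G) hxy hs
      have := isEmpty_ker_eq_of_adj (G := G') hxy hs
      simp only [Nat.card_of_isEmpty]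
  rw [card_hom_eq_card_injective_add_sum, card_hom_eq_card_injective_add_sum,
    Finset.sum_congr rfl hker] at hF
  exact Nat.add_right_cancel hF

theorem nonempty_iso_of_injective_hom [Finite V] [Finite W] {G : SimpleGraph V}
    {G' : SimpleGraph W} {f : G →g G'} (hf : Injective f) {g : G' →g G} (hg : Injective g) :
    Nonempty (G ≃g G') := by
  have hfv : Bijective f := hf.bijective_of_nat_card_le (Nat.card_le_card_of_injective g hg)
  have hfe : Surjective f.mapEdgeSet :=
    ((Hom.mapEdgeSet.injective f hf).bijective_of_nat_card_le
      (Nat.card_le_card_of_injective _ (Hom.mapEdgeSet.injective g hg))).2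
  refine ⟨⟨Equiv.ofBijective f hfv, fun {a b} => ⟨fun hab => ?_, f.map_adj⟩⟩⟩
  obtain ⟨⟨e, he⟩, hfe⟩ := hfe ⟨s(f a, f b), hab⟩
  have : e = s(a, b) := Sym2.map.injective hf (congrArg Subtype.val hfe)
  rwa [this] at he

end SimpleGraph

open SimpleGraph in
/-- (Lovász) Two graphs with at most `n` vertices are isomorphic if and only if they
admit the same number of homomorphisms from every graph with at most `n` vertices. -/
theorem lovasz_hom_counts_characterise_iso (n m m' : ℕ) (hm : m ≤ n) (hm' : m' ≤ n)
    (G : SimpleGraph (Fin m)) (G' : SimpleGraph (Fin m')) :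
    Nonempty (G ≃g G') ↔
      ∀ (k : ℕ), k ≤ n → ∀ F : SimpleGraph (Fin k),
        Nat.card (F →g G) = Nat.card (F →g G') := by
  refine ⟨fun ⟨e⟩ k _ F => Nat.card_congr (Iso.refl.homCongr e), fun h => ?_⟩
  have hself {U : Type} [Finite U] (H : SimpleGraph U) :
      0 < Nat.card {φ : H →g H // Injective φ} :=
    Nat.card_pos_iff.2 ⟨⟨⟨Hom.id, injective_id⟩⟩, inferInstance⟩
  have hGG' := card_injective_hom_eq_of_card_hom_eq h (by simpa using hm) G
  have hG'G := card_injective_hom_eq_of_card_hom_eq (fun k hk F => (h k hk F).symm)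
    (by simpa using hm') G'
  obtain ⟨⟨f, hf⟩⟩ := (Nat.card_pos_iff.1 (hGG' ▸ hself G)).1
  obtain ⟨⟨g, hg⟩⟩ := (Nat.card_pos_iff.1 (hG'G ▸ hself G')).1
  exact nonempty_iso_of_injective_hom hf hg
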